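/- Let f : [0,∞) → ℝ be non-decreasing, concave, f(0) = 0. For Z ∈ ℝ^{d×n} and a column-stochastic-rows assignment matrix Π ∈ ℝ^{n×K} with columns π_k, n_k = ⟨π_k, 1⟩ > 0, define R_{c,f}(Z,Π) = (1/2) ∑_k (n_k/n) ∑_i f(λ_i((1/n_k) Z Diag(π_k) Zᵀ)) and R^var_{c,f}(Z,Π | {U_k}) = (1/2) ∑_k (n_k/n) ∑_{i=1}^p f((1/n_k)(U_kᵀ Z Diag(π_k) Zᵀ U_k)_{ii}). If U_1,…,U_K ∈ O(d,p) satisfy image(Z Diag(π_k) Zᵀ) ⊆ image(U_k) for all k, then R_{c,f}(Z,Π) ≤ R^var_{c,f}(Z,Π | {U_k}). -/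

import Mathlib

open Matrix BigOperators

/-! Diagonalize `S = W diag(λ) Wᵀ` and put `B = Uᵀ W`. Then `(Uᵀ S U)ᵢᵢ = ∑ⱼ Bᵢⱼ² λⱼ`, every row
of `(Bᵢⱼ²)` sums to `1` because `Uᵀ U = 1`, and every column belonging to a nonzero eigenvalue
sums to `1` because that eigenvector lies in the range of `U`, where `U Uᵀ` acts as the identity.
Jensen's inequality along each row, summed over the rows, gives `∑ⱼ f(λⱼ) ≤ ∑ᵢ f((Uᵀ S U)ᵢᵢ)`;
the columns of zero eigenvalues do not matter since `f 0 = 0`. Weighting the classes by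
`nₖ / n ≥ 0` preserves the inequality. -/

theorem ConcaveOn.sum_map_le_sum_map_of_stochastic {ι κ : Type*} [Fintype ι] [Fintype κ]
    {f : ℝ → ℝ} (hf : ConcaveOn ℝ (Set.Ici 0) f) (hf0 : f 0 = 0)
    {w : κ → ι → ℝ} (hw : ∀ i j, 0 ≤ w i j) (hrow : ∀ i, ∑ j, w i j = 1)
    {μ : ι → ℝ} (hμ : ∀ j, 0 ≤ μ j) (hcol : ∀ j, μ j ≠ 0 → ∑ i, w i j = 1) :
    ∑ j, f (μ j) ≤ ∑ i, f (∑ j, w i j * μ j) := calc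
  ∑ j, f (μ j) = ∑ j, (∑ i, w i j) * f (μ j) := by
      refine Finset.sum_congr rfl fun j _ => ?_
      by_cases hj : μ j = 0
      · simp [hj, hf0]
      · rw [hcol j hj, one_mul]
  _ = ∑ i, ∑ j, w i j * f (μ j) := by simp only [Finset.sum_mul]; exact Finset.sum_comm
  _ ≤ ∑ i, f (∑ j, w i j * μ j) := Finset.sum_le_sum fun i _ =>
      hf.le_map_sum (fun j _ => hw i j) (hrow i) (fun j _ => hμ j)

namespace Matrix

variable {m n p R : Type*}

lemma mul_diagonal_mul_transpose_apply_self [CommSemiring R] [Fintype n] [DecidableEq n]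
    (B : Matrix m n R) (μ : n → R) (i : m) :
    (B * diagonal μ * Bᵀ) i i = ∑ j, B i j ^ 2 * μ j := by
  rw [mul_apply]
  simp only [mul_diagonal, transpose_apply, sq]
  exact Finset.sum_congr rfl fun j _ => by ring

lemma transpose_mul_mul_diagonal_apply_self [CommSemiring R] [Fintype m] [Fintype n]
    [DecidableEq n] (B : Matrix m n R) (μ : n → R) (j : n) :
    (Bᵀ * B * diagonal μ) j j = (∑ i, B i j ^ 2) * μ j := by
  rw [mul_diagonal, mul_apply]
  simp only [transpose_apply, sq]

lemma mul_transpose_apply_self [CommSemiring R] [Fintype n] (B : Matrix m n R) (i : m) :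
    (B * Bᵀ) i i = ∑ j, B i j ^ 2 := by
  simp [mul_apply, sq]

theorem _root_.ConcaveOn.sum_map_le_sum_map_diag_mul_diagonal_mul_transpose [Fintype m]
    [Fintype n] [DecidableEq m] [DecidableEq n]
    {f : ℝ → ℝ} (hf : ConcaveOn ℝ (Set.Ici 0) f) (hf0 : f 0 = 0)
    {B : Matrix m n ℝ} (hB : B * Bᵀ = 1) {μ : n → ℝ} (hμ : ∀ j, 0 ≤ μ j)
    (hBμ : Bᵀ * B * diagonal μ = diagonal μ) :
    ∑ j, f (μ j) ≤ ∑ i, f ((B * diagonal μ * Bᵀ) i i) := by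
  simp only [mul_diagonal_mul_transpose_apply_self]
  refine hf.sum_map_le_sum_map_of_stochastic hf0 (fun i j => sq_nonneg _) (fun i => ?_) hμ
    fun j hj => ?_
  · simpa [mul_transpose_apply_self] using congrFun₂ hB i i
  · have := congrFun₂ hBμ j j
    rw [transpose_mul_mul_diagonal_apply_self, diagonal_apply_eq] at this
    exact (mul_eq_right₀ hj).mp this

lemma mul_transpose_mul_eq_of_range_le [CommSemiring R] [Fintype m] [Fintype n] [Fintype p]
    [DecidableEq n] {U : Matrix m n R} (hU : Uᵀ * U = 1) {S : Matrix m p R}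
    (h : LinearMap.range S.mulVecLin ≤ LinearMap.range U.mulVecLin) :
    U * Uᵀ * S = S := by
  refine ext_iff_mulVec.mpr fun v => ?_
  obtain ⟨x, hx⟩ := h ⟨v, rfl⟩
  simp only [mulVecLin_apply] at hx
  rw [← mulVec_mulVec, ← hx, mulVec_mulVec, Matrix.mul_assoc, hU, Matrix.mul_one]

lemma range_mulVecLin_smul_le [CommSemiring R] [Fintype n] (c : R) (M : Matrix m n R) :
    LinearMap.range (c • M).mulVecLin ≤ LinearMap.range M.mulVecLin := by
  rintro _ ⟨v, rfl⟩
  exact ⟨c • v, by simp⟩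

theorem PosSemidef.sum_map_eigenvalues_le_sum_map_diag_transpose_mul_mul [Fintype m]
    [Fintype n] [DecidableEq m] [DecidableEq n]
    {f : ℝ → ℝ} (hf : ConcaveOn ℝ (Set.Ici 0) f) (hf0 : f 0 = 0)
    {S : Matrix m m ℝ} (hS : S.PosSemidef) {U : Matrix m n ℝ} (hU : Uᵀ * U = 1)
    (hrange : LinearMap.range S.mulVecLin ≤ LinearMap.range U.mulVecLin) :
    ∑ j, f (hS.1.eigenvalues j) ≤ ∑ i, f ((Uᵀ * S * U) i i) := by
  set μ := hS.1.eigenvalues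
  set W : Matrix m m ℝ := (hS.1.eigenvectorUnitary : Matrix m m ℝ)
  have hstar : star W = Wᵀ := conjTranspose_eq_transpose_of_trivial W
  have hWW : Wᵀ * W = 1 := hstar ▸ Unitary.coe_star_mul_self _
  have hWW' : W * Wᵀ = 1 := hstar ▸ Unitary.coe_mul_star_self _
  have hspec : S = W * diagonal μ * Wᵀ := by
    rw [← hstar]; simpa using hS.1.spectral_theorem
  have hSW : S * W = W * diagonal μ := by
    rw [hspec, Matrix.mul_assoc, hWW, Matrix.mul_one]
  have hconj : Uᵀ * S * U = (Uᵀ * W) * diagonal μ * (Uᵀ * W)ᵀ := by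
    rw [hspec]; simp only [transpose_mul, transpose_transpose, Matrix.mul_assoc]
  rw [hconj]
  refine hf.sum_map_le_sum_map_diag_mul_diagonal_mul_transpose hf0 ?_ hS.eigenvalues_nonneg ?_
  · rw [transpose_mul, transpose_transpose, Matrix.mul_assoc, ← Matrix.mul_assoc W, hWW',
      Matrix.one_mul, hU]
  · calc (Uᵀ * W)ᵀ * (Uᵀ * W) * diagonal μ = Wᵀ * (U * Uᵀ * S) * W := by
          simp only [transpose_mul, transpose_transpose, Matrix.mul_assoc, hSW]
      _ = diagonal μ := by
          rw [mul_transpose_mul_eq_of_range_le hU hrange, Matrix.mul_assoc, hSW,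
            ← Matrix.mul_assoc, hWW, Matrix.one_mul]

end Matrix

theorem stmt16_general {d n p K : ℕ} (f : ℝ → ℝ)
    (hconc : ConcaveOn ℝ (Set.Ici 0) f) (hf0 : f 0 = 0)
    (Z : Matrix (Fin d) (Fin n) ℝ) (P : Matrix (Fin n) (Fin K) ℝ)
    (hPnn : ∀ j k, 0 ≤ P j k)
    (U : Fin K → Matrix (Fin d) (Fin p) ℝ) (hU : ∀ k, (U k)ᵀ * U k = 1)
    (hrange : ∀ k,
      LinearMap.range (Z * Matrix.diagonal (fun j => P j k) * Zᵀ).mulVecLin ≤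
        LinearMap.range (U k).mulVecLin)
    (hH : ∀ k,
      ((∑ j, P j k)⁻¹ • (Z * Matrix.diagonal (fun j => P j k) * Zᵀ)).IsHermitian) :
    (1 / 2) * ∑ k, ((∑ j, P j k) / n) * ∑ i, f ((hH k).eigenvalues i) ≤
      (1 / 2) * ∑ k, ((∑ j, P j k) / n) * ∑ i : Fin p,
        f ((∑ j, P j k)⁻¹ *
          ((U k)ᵀ * (Z * Matrix.diagonal (fun j => P j k) * Zᵀ) * U k) i i) := by
  have hnk_nonneg : ∀ k, 0 ≤ ∑ j, P j k := fun k => Finset.sum_nonneg fun j _ => hPnn j k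
  gcongr with k
  · exact div_nonneg (hnk_nonneg k) n.cast_nonneg
  set M := Z * diagonal (fun j => P j k) * Zᵀ
  have hM : M.PosSemidef := by
    simpa using (posSemidef_diagonal_iff.mpr fun j => hPnn j k).mul_mul_conjTranspose_same Z
  have hcM : ((∑ j, P j k)⁻¹ • M).PosSemidef := hM.smul (inv_nonneg.mpr (hnk_nonneg k))
  simpa only [Matrix.mul_smul, Matrix.smul_mul, Matrix.smul_apply, smul_eq_mul] using
    hcM.sum_map_eigenvalues_le_sum_map_diag_transpose_mul_mul hconc hf0 (hU k)
      ((range_mulVecLin_smul_le _ M).trans (hrange k))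

theorem stmt16 {d n p K : ℕ} (hn : 0 < n)
    (f : ℝ → ℝ) (hmono : MonotoneOn f (Set.Ici 0))
    (hconc : ConcaveOn ℝ (Set.Ici 0) f) (hf0 : f 0 = 0)
    (Z : Matrix (Fin d) (Fin n) ℝ) (P : Matrix (Fin n) (Fin K) ℝ)
    (hPnn : ∀ j k, 0 ≤ P j k) (hProw : ∀ j, ∑ k, P j k = 1)
    (hnk : ∀ k, 0 < ∑ j, P j k)
    (U : Fin K → Matrix (Fin d) (Fin p) ℝ) (hU : ∀ k, (U k)ᵀ * U k = 1)
    (hrange : ∀ k,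
      LinearMap.range (Z * Matrix.diagonal (fun j => P j k) * Zᵀ).mulVecLin ≤
        LinearMap.range (U k).mulVecLin)
    (hH : ∀ k,
      ((∑ j, P j k)⁻¹ • (Z * Matrix.diagonal (fun j => P j k) * Zᵀ)).IsHermitian) :
    (1 / 2) * ∑ k, ((∑ j, P j k) / n) * ∑ i, f ((hH k).eigenvalues i) ≤
      (1 / 2) * ∑ k, ((∑ j, P j k) / n) * ∑ i : Fin p,
        f ((∑ j, P j k)⁻¹ *
          ((U k)ᵀ * (Z * Matrix.diagonal (fun j => P j k) * Zᵀ) * U k) i i) :=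
  stmt16_general f hconc hf0 Z P hPnn U hU hrange hH
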